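/- Fix γ > 0. For L > 1 define the feasible set S = {(R,P) : R > 0 and P > 2^{2R} − 1}, and for (R,P) ∈ S set s = P/(2^{2R} − 1) (so s > 1), D(R,P) = (1/2)·(s − 1 − ln s) (so D(R,P) > 0), and the normalized total energy per bit E_{γ,L}(R,P) = P/R + γ · max(1/R, 1) · max(0, ln(L / D(R,P))). Let F_γ(L) = inf_{(R,P) ∈ S} E_{γ,L}(R,P). Then F_γ(L) → ∞ as L → ∞; i.e., the lower bound on the total (transmission plus decoding) energy per information bit tends to infinity as the desired bit-error probability tends to zero (L = ln(1/⟨P_e⟩)). -/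
import Mathlib


open Real Filter

/-- `s = P / (2^(2R) - 1)` is the critical noise variance at which the AWGN
capacity equals `R` (noise variance normalized to `1`), and
`D(R,P) = (1/2)(s - 1 - ln s)` is the Gaussian KL divergence `D(s‖1)`. -/
noncomputable def greenKL (R P : ℝ) : ℝ :=
  (1 / 2) * (P / ((2 : ℝ) ^ (2 * R) - 1) - 1 -
    Real.log (P / ((2 : ℝ) ^ (2 * R) - 1)))

/-- Normalized total (transmission plus decoding) energy per information bit:
`E_{γ,L}(R,P) = P/R + γ * max (1/R) 1 * max 0 (ln (L / D(R,P)))`. -/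
noncomputable def greenEnergy (γ L R P : ℝ) : ℝ :=
  P / R + γ * max (1 / R) 1 * max 0 (Real.log (L / greenKL R P))

/-- `F_γ(L)`: the infimum of the energy bound over the feasible set
`S = {(R,P) : R > 0, P > 2^(2R) - 1}`. -/
noncomputable def greenMinEnergy (γ L : ℝ) : ℝ :=
  sInf {e : ℝ | ∃ R P : ℝ, 0 < R ∧ (2 : ℝ) ^ (2 * R) - 1 < P ∧
    e = greenEnergy γ L R P}

lemma green_aux (γ L b R P : ℝ) (hγ : 0 < γ) (hL1 : 1 ≤ L)
    (hb1 : b ≤ Real.sqrt L) (hb2 : b ≤ γ / 2 * Real.log L)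
    (hR : 0 < R) (hP : (2 : ℝ) ^ (2 * R) - 1 < P) :
    b ≤ greenEnergy γ L R P := by
  set A : ℝ := (2 : ℝ) ^ (2 * R) - 1 with hA
  have h2R : (2 : ℝ) ^ (2 * R) = Real.exp (Real.log 2 * (2 * R)) :=
    Real.rpow_def_of_pos (by norm_num) _
  have hlog2 : (1 : ℝ) / 2 ≤ Real.log 2 := by
    have := Real.log_two_gt_d9; linarith
  have hexp : Real.log 2 * (2 * R) + 1 ≤ Real.exp (Real.log 2 * (2 * R)) :=
    Real.add_one_le_exp _
  have hRA : R ≤ A := by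
    have : Real.log 2 * (2 * R) ≥ R := by nlinarith
    rw [hA, h2R]; linarith
  have hA0 : 0 < A := by
    have : 0 < Real.log 2 * (2 * R) := by nlinarith
    have := Real.add_one_le_exp (Real.log 2 * (2 * R))
    rw [hA, h2R]; linarith
  have hPA : A < P := hP
  have hP0 : 0 < P := lt_trans hA0 hPA
  have hs1 : 1 < P / A := (one_lt_div hA0).mpr hPA
  have hs0 : 0 < P / A := lt_trans one_pos hs1
  have hlogs : Real.log (P / A) < P / A - 1 :=
    Real.log_lt_sub_one_of_pos hs0 (ne_of_gt hs1)
  have hlogs0 : 0 ≤ Real.log (P / A) := Real.log_nonneg hs1.le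
  have hD0 : 0 < greenKL R P := by
    simp only [greenKL, ← hA]; linarith
  have hDx : greenKL R P ≤ P / R := by
    have h1 : greenKL R P ≤ (1 / 2) * (P / A) := by
      simp only [greenKL, ← hA]; linarith
    have h2 : P / A ≤ P / R := by
      apply div_le_div_of_nonneg_left hP0.le hR hRA
    have hx0 : 0 ≤ P / R := le_of_lt (div_pos hP0 hR)
    nlinarith
  have hx0 : 0 < P / R := div_pos hP0 hR
  have hm1 : (1 : ℝ) ≤ max (1 / R) 1 := le_max_right _ _
  have ht0 : 0 ≤ max 0 (Real.log (L / greenKL R P)) := le_max_left _ _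
  have hE : P / R + γ * max 0 (Real.log (L / greenKL R P)) ≤ greenEnergy γ L R P := by
    unfold greenEnergy
    have h := mul_le_mul_of_nonneg_right (mul_le_mul_of_nonneg_left hm1 hγ.le) ht0
    rw [mul_one] at h
    linarith
  rcases le_or_gt (Real.sqrt L) (P / R) with h | h
  · have : 0 ≤ γ * max 0 (Real.log (L / greenKL R P)) := by positivity
    linarith
  · -- P/R < sqrt L
    have hL0 : (0 : ℝ) < L := lt_of_lt_of_le one_pos hL1
    have hsL : Real.sqrt L ≤ L / (P / R) := by
      rw [le_div_iff₀ hx0]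
      calc Real.sqrt L * (P / R) ≤ Real.sqrt L * Real.sqrt L := by
            apply mul_le_mul_of_nonneg_left h.le (Real.sqrt_nonneg L)
        _ = L := Real.mul_self_sqrt hL0.le
    have h1 : L / (P / R) ≤ L / greenKL R P :=
      div_le_div_of_nonneg_left hL0.le hD0 hDx
    have h2 : Real.log (Real.sqrt L) ≤ Real.log (L / greenKL R P) := by
      apply Real.log_le_log (Real.sqrt_pos.mpr hL0)
      linarith
    rw [Real.log_sqrt hL0.le] at h2
    have h3 : Real.log L / 2 ≤ max 0 (Real.log (L / greenKL R P)) :=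
      le_trans h2 (le_max_right _ _)
    have hlogL0 : 0 ≤ Real.log L := Real.log_nonneg hL1
    have : γ / 2 * Real.log L ≤ γ * max 0 (Real.log (L / greenKL R P)) := by
      nlinarith
    linarith
/-- The lower bound on the total energy per information bit tends to infinity
as the desired bit-error probability tends to zero (`L = ln (1/⟨P_e⟩) → ∞`). -/
theorem green_total_energy_tendsto_atTop (γ : ℝ) (hγ : 0 < γ) :
    Tendsto (fun L : ℝ => greenMinEnergy γ L) atTop atTop := by
  rw [tendsto_atTop]
  intro b
  rw [eventually_atTop]
  refine ⟨max 1 (max ((max b 0) ^ 2) (Real.exp (2 * b / γ))), fun L hL => ?_⟩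
  have hL1 : 1 ≤ L := le_trans (le_max_left _ _) hL
  have hL0 : (0 : ℝ) < L := lt_of_lt_of_le one_pos hL1
  have hb1 : b ≤ Real.sqrt L := by
    have hb2L : (max b 0) ^ 2 ≤ L :=
      le_trans (le_trans (le_max_left _ _) (le_max_right _ _)) hL
    have : max b 0 ≤ Real.sqrt L := by
      rw [show max b 0 = |max b 0| from (abs_of_nonneg (le_max_right _ _)).symm,
        ← Real.sqrt_sq_eq_abs]
      exact Real.sqrt_le_sqrt hb2L
    exact le_trans (le_max_left _ _) this
  have hb2 : b ≤ γ / 2 * Real.log L := by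
    have hexpL : Real.exp (2 * b / γ) ≤ L :=
      le_trans (le_trans (le_max_right _ _) (le_max_right _ _)) hL
    have : 2 * b / γ ≤ Real.log L := by
      rw [← Real.log_exp (2 * b / γ)]
      exact Real.log_le_log (Real.exp_pos _) hexpL
    rw [div_le_iff₀ hγ] at this
    linarith
  unfold greenMinEnergy
  apply le_csInf
  · refine ⟨greenEnergy γ L 1 4, 1, 4, one_pos, ?_, rfl⟩
    have : (2 : ℝ) ^ (2 * (1 : ℝ)) = 4 := by
      rw [show (2 : ℝ) * (1 : ℝ) = ((2 : ℕ) : ℝ) by norm_num, Real.rpow_natCast]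
      norm_num
    rw [this]; norm_num
  · rintro e ⟨R, P, hR, hP, rfl⟩
    exact green_aux γ L b R P hγ hL1 hb1 hb2 hR hP
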